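/- arXiv:2402.10795 — 3 statements merged into one kernel-verified Lean document; each statement's English description precedes it below -/
import Mathlib

section
/- Simultaneous update on disjoint groups: let (g₁, h₁) and (g₂, h₂) be two accepted pairs with disjoint groups, each satisfying w_i · (L(D, f | g_i) − L(D, h_i | g_i)) > α. Then the model f'(x) = h₁(x) if g₁(x)=1, else h₂(x) if g₂(x)=1, else f(x), satisfies L(D, f) − L(D, f') > 2α. -/
/-! The loss change of the combined update splits into the contributions of the two disjoint
groups, and on each group the combined model is the accepted `hᵢ`; the weighted conditional
loss `wᵢ · L(D, · | gᵢ)` is the unconditional loss restricted to the group, so the two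
contributions are exactly the two accepted improvements, each larger than `α`. -/

open MeasureTheory ProbabilityTheory

variable {X : Type*} [MeasurableSpace X]

/-- The set of labeled examples whose features lie in the group `g`. -/
def grpSet (g : X → Bool) : Set (X × ℝ) := {z | g z.1 = true}

/-- Pointwise squared loss of a predictor on a labeled example. -/
noncomputable def sqLoss (f : X → ℝ) (z : X × ℝ) : ℝ := (f z.1 - z.2) ^ 2

/-- Overall expected squared loss `L(D, f)`. -/
noncomputable def loss (μ : Measure (X × ℝ)) (f : X → ℝ) : ℝ := ∫ z, sqLoss f z ∂μ

/-- Conditional expected squared loss `L(D, f | g)` on the group `g`. -/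
noncomputable def closs (μ : Measure (X × ℝ)) (f : X → ℝ) (g : X → Bool) : ℝ :=
  ∫ z, sqLoss f z ∂(μ[|grpSet g])

/-- The weight `w = P[g(x) = 1]` of the group `g`. -/
noncomputable def weight (μ : Measure (X × ℝ)) (g : X → Bool) : ℝ := (μ (grpSet g)).toReal

section Integral

variable {Ω : Type*} [MeasurableSpace Ω] {μ : Measure Ω}

/-- When `μ s = 0` both sides vanish: `μ[|s]` is then the zero measure. -/
theorem measureReal_mul_integral_cond [IsFiniteMeasure μ] (s : Set Ω) (F : Ω → ℝ) :
    μ.real s * ∫ x, F x ∂μ[|s] = ∫ x in s, F x ∂μ := by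
  by_cases hs : μ s = 0
  · simp [Measure.real, hs, Measure.restrict_eq_zero.mpr hs]
  · rw [ProbabilityTheory.cond, integral_smul_measure, smul_eq_mul, ENNReal.toReal_inv,
      measureReal_def, ← mul_assoc,
      mul_inv_cancel₀ (ENNReal.toReal_ne_zero.mpr ⟨hs, measure_ne_top μ s⟩), one_mul]

theorem integral_eq_setIntegral_add_setIntegral {s t : Set Ω} {F : Ω → ℝ}
    (hst : Disjoint s t) (ht : MeasurableSet t) (hF : Integrable F μ)
    (hF₀ : ∀ x ∉ s ∪ t, F x = 0) :
    ∫ x, F x ∂μ = ∫ x in s, F x ∂μ + ∫ x in t, F x ∂μ := by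
  rw [← setIntegral_eq_integral_of_forall_compl_eq_zero hF₀,
    setIntegral_union hst ht hF.integrableOn hF.integrableOn]

end Integral

theorem measurableSet_grpSet {g : X → Bool} (hg : Measurable g) : MeasurableSet (grpSet g) :=
  measurable_fst (hg (measurableSet_singleton true))

theorem disjoint_grpSet {Y : Type*} {g₁ g₂ : Y → Bool} (hdisj : ∀ x, g₁ x = true → g₂ x = false) :
    Disjoint (grpSet g₁) (grpSet g₂) :=
  Set.disjoint_left.mpr fun z h₁ h₂ => by simp_all [grpSet]

theorem sqLoss_eqOn_grpSet {Y : Type*} {f h : Y → ℝ} {g : Y → Bool}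
    (hfh : ∀ x, g x = true → f x = h x) :
    Set.EqOn (sqLoss f) (sqLoss h) (grpSet g) := fun z hz => by
  simp only [sqLoss, hfh z.1 hz]

theorem weight_mul_closs (μ : Measure (X × ℝ)) [IsFiniteMeasure μ] (f : X → ℝ) (g : X → Bool) :
    weight μ g * closs μ f g = ∫ z in grpSet g, sqLoss f z ∂μ :=
  measureReal_mul_integral_cond _ _

theorem weight_mul_closs_sub_of_eq {μ : Measure (X × ℝ)} [IsFiniteMeasure μ]
    {f f' h : X → ℝ} {g : X → Bool} (hg : Measurable g) (hf'h : ∀ x, g x = true → f' x = h x)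
    (hf : Integrable (sqLoss f) μ) (hf' : Integrable (sqLoss f') μ) :
    weight μ g * (closs μ f g - closs μ h g)
      = ∫ z in grpSet g, (sqLoss f z - sqLoss f' z) ∂μ := by
  rw [mul_sub, weight_mul_closs, weight_mul_closs,
    ← setIntegral_congr_fun (measurableSet_grpSet hg) (sqLoss_eqOn_grpSet hf'h),
    integral_sub hf.integrableOn hf'.integrableOn]

theorem simultaneous_disjoint_update_general
    (μ : Measure (X × ℝ)) [IsProbabilityMeasure μ]
    (f h₁ h₂ : X → ℝ) (g₁ g₂ : X → Bool) (α : ℝ)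
    (hdisj : ∀ x, g₁ x = true → g₂ x = false)
    (hg1 : Measurable g₁) (hg2 : Measurable g₂)
    (hintf : Integrable (sqLoss f) μ)
    (hintf' : Integrable
      (sqLoss (fun x => if g₁ x then h₁ x else if g₂ x then h₂ x else f x)) μ)
    (hacc1 : weight μ g₁ * (closs μ f g₁ - closs μ h₁ g₁) > α)
    (hacc2 : weight μ g₂ * (closs μ f g₂ - closs μ h₂ g₂) > α) :
    loss μ f
      - loss μ (fun x => if g₁ x then h₁ x else if g₂ x then h₂ x else f x)
      > 2 * α := by
  set f' : X → ℝ := fun x => if g₁ x then h₁ x else if g₂ x then h₂ x else f x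
  have hf'₁ : ∀ x, g₁ x = true → f' x = h₁ x := fun x hx => by simp [f', hx]
  have hf'₂ : ∀ x, g₂ x = true → f' x = h₂ x := fun x hx => by
    have : g₁ x = false := by cases h : g₁ x <;> simp_all
    simp [f', hx, this]
  have hf'_out : ∀ z ∉ grpSet g₁ ∪ grpSet g₂, sqLoss f z - sqLoss f' z = 0 := fun z hz => by
    simp_all [grpSet, sqLoss, f']
  calc loss μ f - loss μ f' = ∫ z, (sqLoss f z - sqLoss f' z) ∂μ :=
        (integral_sub hintf hintf').symm
    _ = weight μ g₁ * (closs μ f g₁ - closs μ h₁ g₁)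
        + weight μ g₂ * (closs μ f g₂ - closs μ h₂ g₂) := by
      rw [integral_eq_setIntegral_add_setIntegral (disjoint_grpSet hdisj)
          (measurableSet_grpSet hg2) (F := fun z => sqLoss f z - sqLoss f' z)
          (hintf.sub hintf') hf'_out,
        weight_mul_closs_sub_of_eq hg1 hf'₁ hintf hintf',
        weight_mul_closs_sub_of_eq hg2 hf'₂ hintf hintf']
    _ > 2 * α := by linarith

/-- simultaneously applying two accepted pairs with disjoint groups
decreases the overall loss by more than `2α`. -/
theorem simultaneous_disjoint_update
    (μ : Measure (X × ℝ)) [IsProbabilityMeasure μ]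
    (f h₁ h₂ : X → ℝ) (g₁ g₂ : X → Bool) (α : ℝ)
    (hdisj : ∀ x, g₁ x = true → g₂ x = false)
    (hw1 : 0 < weight μ g₁) (hw2 : 0 < weight μ g₂)
    (hf : Measurable f) (hh1 : Measurable h₁) (hh2 : Measurable h₂)
    (hg1 : Measurable g₁) (hg2 : Measurable g₂)
    (hintf : Integrable (sqLoss f) μ)
    (hintf' : Integrable
      (sqLoss (fun x => if g₁ x then h₁ x else if g₂ x then h₂ x else f x)) μ)
    (hacc1 : weight μ g₁ * (closs μ f g₁ - closs μ h₁ g₁) > α)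
    (hacc2 : weight μ g₂ * (closs μ f g₂ - closs μ h₂ g₂) > α) :
    loss μ f
      - loss μ (fun x => if g₁ x then h₁ x else if g₂ x then h₂ x else f x)
      > 2 * α :=
  simultaneous_disjoint_update_general μ f h₁ h₂ g₁ g₂ α hdisj hg1 hg2 hintf hintf' hacc1 hacc2
end

section
/- An update (g, h) accepted at threshold α can increase loss on a subgroup: there exist a finite distribution D, model f, predictor h, groups g and g' with g'(x) = 1 implying g(x) = 1, such that w · (L(D, f | g) − L(D, h | g)) > α (so the update is accepted and overall loss decreases), yet L(D, f' | g') > L(D, f | g') for the updated model f'. (This is why the repair procedure is needed.) -/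
open MeasureTheory ProbabilityTheory

variable {X : Type*} [MeasurableSpace X]

open scoped ENNReal

/-! Two equally likely points `(0, 0)` and `(1, 0)`, both labelled `0`. The update takes `g` to be
everything and replaces `f = (1, 3)` by `h = (2, 0)`: the overall loss drops from `5` to `2`, but on
the subgroup `g' = {x = 0}` it rises from `1` to `4`. -/

section TwoPoint

variable {α : Type*} [MeasurableSpace α] (a b : α)

noncomputable def twoPoint : Measure α :=
  (2⁻¹ : ℝ≥0∞) • (Measure.dirac a + Measure.dirac b)

instance isProbabilityMeasure_twoPoint : IsProbabilityMeasure (twoPoint a b) :=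
  ⟨by simp [twoPoint, ← two_mul, ENNReal.mul_inv_cancel]⟩

variable [MeasurableSingletonClass α]

theorem twoPoint_apply (s : Set α) :
    twoPoint a b s = 2⁻¹ * (s.indicator 1 a + s.indicator 1 b) := by
  simp [twoPoint, mul_add]

theorem integral_twoPoint (φ : α → ℝ) : ∫ z, φ z ∂twoPoint a b = (φ a + φ b) / 2 := by
  rw [twoPoint, integral_smul_measure,
    integral_add_measure (integrable_dirac (by simp)) (integrable_dirac (by simp)),
    integral_dirac, integral_dirac]
  simp [div_eq_inv_mul]

theorem cond_twoPoint_of_mem_of_notMem {s : Set α} (ha : a ∈ s) (hb : b ∉ s) :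
    (twoPoint a b)[|s] = Measure.dirac a := by
  classical
  have hs : twoPoint a b s = 2⁻¹ := by simp [twoPoint_apply, ha, hb]
  rw [ProbabilityTheory.cond, hs, twoPoint, Measure.restrict_smul, Measure.restrict_add,
    restrict_dirac, restrict_dirac, if_pos ha, if_neg hb, add_zero, inv_inv, smul_smul,
    ENNReal.mul_inv_cancel two_ne_zero ENNReal.ofNat_ne_top, one_smul]

end TwoPoint

section WholePopulation

variable (μ : Measure (X × ℝ)) [IsProbabilityMeasure μ]

theorem weight_true : weight μ (fun _ : X => true) = 1 := by
  simp [weight, grpSet]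

theorem closs_true (f : X → ℝ) : closs μ f (fun _ => true) = loss μ f := by
  rw [closs, show grpSet (fun _ : X => true) = Set.univ from Set.eq_univ_of_forall fun _ => rfl,
    cond_univ, loss]

end WholePopulation

/-- an accepted update can increase loss on a subgroup: there is a finitely
supported distribution, a model, an accepted `(g, h)` pair (decreasing overall loss),
and a subgroup `g' ⊆ g` on which the updated model is strictly worse. -/
theorem accepted_update_can_hurt_subgroup :
    ∃ (μ : Measure (ℕ × ℝ)) (_ : IsProbabilityMeasure μ)
      (f h : ℕ → ℝ) (g g' : ℕ → Bool) (α : ℝ),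
      0 < α
      ∧ (∃ s : Finset (ℕ × ℝ), μ (↑s)ᶜ = 0)
      ∧ (∀ x, g' x = true → g x = true)
      ∧ 0 < weight μ g ∧ 0 < weight μ g'
      ∧ weight μ g * (closs μ f g - closs μ h g) > α
      ∧ loss μ (fun x => if g x then h x else f x) < loss μ f
      ∧ closs μ (fun x => if g x then h x else f x) g' > closs μ f g' := by
  refine ⟨twoPoint (0, 0) (1, 0), inferInstance, fun x => if x = 0 then 1 else 3,
    fun x => if x = 0 then 2 else 0, fun _ => true, fun x => decide (x = 0), 1, one_pos,
    ⟨{(0, 0), (1, 0)}, by simp [twoPoint_apply]⟩, fun _ _ => rfl, ?_, ?_, ?_, ?_, ?_⟩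
  · simp [weight_true]
  · simp [weight, twoPoint_apply, grpSet]
  · rw [weight_true, closs_true, closs_true, loss, loss, integral_twoPoint, integral_twoPoint]
    norm_num [sqLoss]
  · simp only [if_true]
    rw [loss, loss, integral_twoPoint, integral_twoPoint]
    norm_num [sqLoss]
  · have hsub : (twoPoint ((0 : ℕ), (0 : ℝ)) (1, 0))[|grpSet fun x => decide (x = 0)] =
        Measure.dirac (0, 0) :=
      cond_twoPoint_of_mem_of_notMem _ _ (by simp [grpSet]) (by simp [grpSet])
    simp only [if_true]
    rw [closs, closs, hsub, integral_dirac, integral_dirac]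
    norm_num [sqLoss]
end

section
/- ε-approximate Bayes optimality at termination: suppose the bias-bounty process terminates in the sense that no pair (g, h) from a class where g ranges over all measurable indicators and h over all measurable predictors satisfies w · (L(D, f | g) − L(D, h | g)) > α. Then for every group g with weight w ≥ α / ε (for any ε > 0), the conditional loss of f on g exceeds the Bayes optimal conditional loss on g by at most ε: L(D, f | g) − L(D, f* | g) ≤ ε, where f*(x) = E[y | x]. -/
open MeasureTheory ProbabilityTheory

variable {X : Type*} [MeasurableSpace X]

theorem termination_implies_approx_bayes_optimal_general
    (μ : Measure (X × ℝ))
    (f fstar : X → ℝ) (α ε : ℝ) (hα : 0 < α) (hε : 0 < ε)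
    (hterm : ∀ (g : X → Bool) (h : X → ℝ),
      ¬ (weight μ g * (closs μ f g - closs μ h g) > α)) :
    ∀ g : X → Bool, weight μ g ≥ α / ε →
      closs μ f g - closs μ fstar g ≤ ε := by
  intro g hg
  have hw : 0 < weight μ g := (div_pos hα hε).trans_le hg
  -- The Bayes optimal predictor is itself one of the candidate updates `h`.
  refine le_of_mul_le_mul_left ?_ hw
  calc weight μ g * (closs μ f g - closs μ fstar g) ≤ α := not_lt.mp (hterm g fstar)
    _ ≤ weight μ g * ε := (div_le_iff₀ hε).mp hg

/-- ε-approximate Bayes optimality at termination: if no `(g, h)` pair has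
weighted improvement over `f` exceeding `α`, then on every group of weight at least
`α / ε` the conditional loss of `f` is within `ε` of that of the Bayes optimal
predictor `f*(x) = E[y | x]`. -/
theorem termination_implies_approx_bayes_optimal
    (μ : Measure (X × ℝ)) [IsProbabilityMeasure μ]
    (f fstar : X → ℝ) (α ε : ℝ) (hα : 0 < α) (hε : 0 < ε)
    (hfm : Measurable fstar) (hf : Measurable f)
    (hy2 : Integrable (fun z : X × ℝ => z.2 ^ 2) μ)
    (hintf : Integrable (sqLoss f) μ) (hintfs : Integrable (sqLoss fstar) μ)
    (hfstar : (fun z : X × ℝ => fstar z.1)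
      =ᵐ[μ] μ[(fun z : X × ℝ => z.2) | MeasurableSpace.comap Prod.fst inferInstance])
    (hterm : ∀ (g : X → Bool) (h : X → ℝ),
      ¬ (weight μ g * (closs μ f g - closs μ h g) > α)) :
    ∀ g : X → Bool, weight μ g ≥ α / ε →
      closs μ f g - closs μ fstar g ≤ ε :=
  termination_implies_approx_bayes_optimal_general μ f fstar α ε hα hε hterm
end
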